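/- Let Λ ⊆ ℝⁿ be an odd self-dual lattice and δ ∈ Λ with δ/2 ∉ Λ ∪ S(Λ) and δ² ∈ 4ℤ. Then the double orbifold returns the original lattice: (Λ⁻)⁻_δ = Λ, where Λ⁻ = Λ_even ∪ (Λ_odd + δ/2) and the second orbifold is taken with the same shift vector δ (which lies in (Λ⁻)_even). -/
import Mathlib


open scoped BigOperators

namespace PaperFormal

/-- Standard dot product on `ℝⁿ`. -/
def dot {n : ℕ} (x y : Fin n → ℝ) : ℝ := ∑ i, x i * y i

/-- Squared norm. -/
def nsq {n : ℕ} (x : Fin n → ℝ) : ℝ := dot x x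

/-- The dual of a set of vectors: all vectors pairing integrally with every element. -/
def dualSet {n : ℕ} (L : Set (Fin n → ℝ)) : Set (Fin n → ℝ) :=
  {x | ∀ l ∈ L, ∃ k : ℤ, dot l x = (k : ℝ)}

/-- The even-norm part `Λ₀` of a lattice. -/
def evenSub {n : ℕ} (L : Set (Fin n → ℝ)) : Set (Fin n → ℝ) :=
  {l | l ∈ L ∧ ∃ k : ℤ, dot l l = 2 * (k : ℝ)}

/-- The shadow `S(Λ) = Λ₀* \ Λ`. -/
def shadow {n : ℕ} (L : Set (Fin n → ℝ)) : Set (Fin n → ℝ) :=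
  dualSet (evenSub L) \ L

/-- An odd self-dual lattice: equal to its dual, and containing a vector of odd norm. -/
def IsOddSelfDual {n : ℕ} (L : Set (Fin n → ℝ)) : Prop :=
  L = dualSet L ∧ ∃ v ∈ L, ∃ k : ℤ, dot v v = 2 * (k : ℝ) + 1

/-- `χ` is a characteristic vector of `L`: `λ·λ ≡ χ·λ (mod 2)` for all `λ ∈ L`. -/
def IsCharacteristic {n : ℕ} (L : Set (Fin n → ℝ)) (χ : Fin n → ℝ) : Prop :=
  χ ∈ L ∧ ∀ l ∈ L, ∃ k : ℤ, dot l l - dot χ l = 2 * (k : ℝ)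

/-- `Λ_{δ-even}`. -/
def deltaEven {n : ℕ} (L : Set (Fin n → ℝ)) (δ : Fin n → ℝ) : Set (Fin n → ℝ) :=
  {l | l ∈ L ∧ ∃ k : ℤ, dot δ l = 2 * (k : ℝ)}

/-- `Λ_{δ-odd}`. -/
def deltaOdd {n : ℕ} (L : Set (Fin n → ℝ)) (δ : Fin n → ℝ) : Set (Fin n → ℝ) :=
  {l | l ∈ L ∧ ∃ k : ℤ, dot δ l = 2 * (k : ℝ) + 1}

/-- Translate a set of vectors by `v`. -/
def shiftSet {n : ℕ} (A : Set (Fin n → ℝ)) (v : Fin n → ℝ) : Set (Fin n → ℝ) :=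
  (fun x => x + v) '' A

/-- The orbifold lattice `Λ⁺ = Λ_even ∪ (Λ_even + δ/2)`. -/
def orbPlus {n : ℕ} (L : Set (Fin n → ℝ)) (δ : Fin n → ℝ) : Set (Fin n → ℝ) :=
  deltaEven L δ ∪ shiftSet (deltaEven L δ) ((2 : ℝ)⁻¹ • δ)

/-- The orbifold lattice `Λ⁻ = Λ_even ∪ (Λ_odd + δ/2)`. -/
def orbMinus {n : ℕ} (L : Set (Fin n → ℝ)) (δ : Fin n → ℝ) : Set (Fin n → ℝ) :=
  deltaEven L δ ∪ shiftSet (deltaOdd L δ) ((2 : ℝ)⁻¹ • δ)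

/-- The gauging condition for a shift vector: `δ ∈ Λ`, `δ/2 ∉ Λ ∪ S(Λ)`, `δ² ∈ 4ℤ`. -/
def GaugingCondition {n : ℕ} (L : Set (Fin n → ℝ)) (δ : Fin n → ℝ) : Prop :=
  δ ∈ L ∧ (2 : ℝ)⁻¹ • δ ∉ L ∧ (2 : ℝ)⁻¹ • δ ∉ shadow L ∧
    ∃ k : ℤ, dot δ δ = 4 * (k : ℝ)

/-- Inner product of codewords, valued in `ℤ/k`. -/
def codeDot {n k : ℕ} (c c' : Fin n → ZMod k) : ZMod k := ∑ i, c i * c' i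

/-- The dual code. -/
def dualCode {n k : ℕ} (C : Set (Fin n → ZMod k)) : Set (Fin n → ZMod k) :=
  {x | ∀ c ∈ C, codeDot c x = 0}

/-- Hamming weight of a binary codeword. -/
def wt {n : ℕ} (c : Fin n → ZMod 2) : ℕ :=
  (Finset.univ.filter fun i => c i = 1).card

/-- A singly-even self-dual binary code: self-dual, with some codeword of weight `≢ 0 (mod 4)`. -/
def IsSinglyEvenSelfDual {n : ℕ} (C : Set (Fin n → ZMod 2)) : Prop :=
  C = dualCode C ∧ ∃ c ∈ C, ¬ (4 ∣ wt c)

/-- Lift of a binary codeword to `{0,1}ⁿ ⊆ ℝⁿ`. -/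
def liftBin {n : ℕ} (c : Fin n → ZMod 2) : Fin n → ℝ := fun i => ((c i).val : ℝ)

/-- Construction A lattice of a binary code: `Λ(C) = {(c + 2m)/√2}`. -/
def constructionA {n : ℕ} (C : Set (Fin n → ZMod 2)) : Set (Fin n → ℝ) :=
  {x | ∃ c ∈ C, ∃ m : Fin n → ℤ,
    x = fun i => (liftBin c i + 2 * (m i : ℝ)) / Real.sqrt 2}

/-- Construction A lattice of a `ℤ/k` code: `Λ(C) = {(c + km)/√k}`. -/
def constructionAZ {n : ℕ} (k : ℕ) (C : Set (Fin n → ZMod k)) : Set (Fin n → ℝ) :=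
  {x | ∃ c ∈ C, ∃ m : Fin n → ℤ,
    x = fun i => (((c i).val : ℝ) + (k : ℝ) * (m i : ℝ)) / Real.sqrt k}

/-- The shift vector `δ = (1,…,1)/√2`. -/
noncomputable def deltaAll (n : ℕ) : Fin n → ℝ := fun _ => 1 / Real.sqrt 2

/-- Theta function of a set of vectors, `Θ_L(q) = Σ_{λ∈L} q^{λ²/2}`. -/
noncomputable def thetaSet {n : ℕ} (L : Set (Fin n → ℝ)) (q : ℝ) : ℝ :=
  ∑' l : L, q ^ (dot (l : Fin n → ℝ) (l : Fin n → ℝ) / 2)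

/-- Jacobi theta function `θ₂(q) = Σ_m q^{(m+1/2)²/2}`. -/
noncomputable def theta2 (q : ℝ) : ℝ := ∑' m : ℤ, q ^ (((m : ℝ) + 1 / 2) ^ 2 / 2)

/-- Jacobi theta function `θ₃(q) = Σ_m q^{m²/2}`. -/
noncomputable def theta3 (q : ℝ) : ℝ := ∑' m : ℤ, q ^ ((m : ℝ) ^ 2 / 2)

/-- Jacobi theta function `θ₄(q) = Σ_m (−1)^m q^{m²/2}`. -/
noncomputable def theta4 (q : ℝ) : ℝ := ∑' m : ℤ, (-1 : ℝ) ^ m * q ^ ((m : ℝ) ^ 2 / 2)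

/-- `ℤⁿ₊`: integer vectors with even coordinate sum. -/
def intEven (n : ℕ) : Set (Fin n → ℤ) := {m | Even (∑ i, m i)}

/-- `ℤⁿ₋`: integer vectors with odd coordinate sum. -/
def intOdd (n : ℕ) : Set (Fin n → ℤ) := {m | Odd (∑ i, m i)}

/-- The doubly-even subcode `C₀` of a binary code. -/
def doublyEvenSub {n : ℕ} (C : Set (Fin n → ZMod 2)) : Set (Fin n → ZMod 2) :=
  {c | c ∈ C ∧ wt c % 4 = 0}

/-- The code shadow `S(C) = C₀⊥ \ C`. -/
def codeShadow {n : ℕ} (C : Set (Fin n → ZMod 2)) : Set (Fin n → ZMod 2) :=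
  dualCode (doublyEvenSub C) \ C

lemma dot_add_right' {n : ℕ} (a x y : Fin n → ℝ) :
    dot a (x + y) = dot a x + dot a y := by
  simp [dot, Pi.add_apply, mul_add, Finset.sum_add_distrib]

lemma dot_sub_right' {n : ℕ} (a x y : Fin n → ℝ) :
    dot a (x - y) = dot a x - dot a y := by
  simp [dot, Pi.sub_apply, mul_sub, Finset.sum_sub_distrib]

lemma dot_smul_right' {n : ℕ} (a : Fin n → ℝ) (c : ℝ) (x : Fin n → ℝ) :
    dot a (c • x) = c * dot a x := by
  simp [dot, Pi.smul_apply, smul_eq_mul, Finset.mul_sum, mul_left_comm]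

/-- the double `(−)`-orbifold with the same shift vector returns
the original lattice. -/
theorem orbMinus_orbMinus {n : ℕ} (L : Set (Fin n → ℝ))
    (hL : IsOddSelfDual L) (δ : Fin n → ℝ) (hδ : GaugingCondition L δ) :
    orbMinus (orbMinus L δ) δ = L := by
  obtain ⟨hsd, -⟩ := hL
  obtain ⟨hδL, -, -, j, hj⟩ := hδ
  set h : Fin n → ℝ := (2 : ℝ)⁻¹ • δ with hh
  have hint : ∀ x ∈ L, ∃ k : ℤ, dot δ x = (k : ℝ) := by
    intro x hx
    have : x ∈ dualSet L := hsd ▸ hx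
    exact this δ hδL
  have hadd : ∀ x ∈ L, x + δ ∈ L := by
    intro x hx
    rw [hsd]
    intro l hl
    obtain ⟨k1, h1⟩ := (hsd ▸ hx : x ∈ dualSet L) l hl
    obtain ⟨k2, h2⟩ := (hsd ▸ hδL : δ ∈ dualSet L) l hl
    exact ⟨k1 + k2, by rw [dot_add_right', h1, h2]; push_cast; ring⟩
  have hsub : ∀ x ∈ L, x - δ ∈ L := by
    intro x hx
    rw [hsd]
    intro l hl
    obtain ⟨k1, h1⟩ := (hsd ▸ hx : x ∈ dualSet L) l hl
    obtain ⟨k2, h2⟩ := (hsd ▸ hδL : δ ∈ dualSet L) l hl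
    exact ⟨k1 - k2, by rw [dot_sub_right', h1, h2]; push_cast; ring⟩
  have hhalf : dot δ h = 2 * (j : ℝ) := by
    rw [hh, dot_smul_right', hj]; ring
  have hhh : h + h = δ := by
    rw [hh, ← two_smul ℝ, smul_smul]; norm_num
  -- δ-pairing of elements of Λ⁻
  have hEM : deltaEven (orbMinus L δ) δ = deltaEven L δ := by
    ext x
    constructor
    · rintro ⟨hx, k, hk⟩
      rcases hx with hx | hx
      · exact hx
      · obtain ⟨l, ⟨hlL, m, hm⟩, rfl⟩ := hx
        exfalso
        have : dot δ (l + h) = 2 * ((m : ℝ) + (j : ℝ)) + 1 := by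
          rw [dot_add_right', hm, hhalf]; ring
        rw [hk] at this
        have : (2 * k : ℤ) = 2 * (m + j) + 1 := by exact_mod_cast this
        omega
    · rintro ⟨hxL, k, hk⟩
      exact ⟨Or.inl ⟨hxL, k, hk⟩, k, hk⟩
  have hOM : deltaOdd (orbMinus L δ) δ = shiftSet (deltaOdd L δ) h := by
    ext x
    constructor
    · rintro ⟨hx, k, hk⟩
      rcases hx with hx | hx
      · exfalso
        obtain ⟨-, m, hm⟩ := hx
        rw [hk] at hm
        have : (2 * (k:ℝ) + 1) = 2 * (m:ℝ) := hm
        have : (2 * k + 1 : ℤ) = 2 * m := by exact_mod_cast this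
        omega
      · exact hx
    · rintro ⟨l, ⟨hlL, m, hm⟩, rfl⟩
      refine ⟨Or.inr ⟨l, ⟨hlL, m, hm⟩, rfl⟩, m + j, ?_⟩
      simp only
      rw [dot_add_right', hm, hhalf]; push_cast; ring
  have hshift2 : shiftSet (shiftSet (deltaOdd L δ) h) h = deltaOdd L δ := by
    ext x
    constructor
    · rintro ⟨y, ⟨l, ⟨hlL, m, hm⟩, rfl⟩, rfl⟩
      have heq : l + h + h = l + δ := by rw [add_assoc, hhh]
      refine ⟨?_, m + 2 * j, ?_⟩
      · show l + h + h ∈ L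
        rw [heq]; exact hadd l hlL
      · show dot δ (l + h + h) = 2 * ((m + 2 * j : ℤ) : ℝ) + 1
        rw [heq, dot_add_right', hm, hj]; push_cast; ring
    · rintro ⟨hxL, m, hm⟩
      refine ⟨x - δ + h, ⟨x - δ, ⟨hsub x hxL, m - 2 * j, ?_⟩, rfl⟩, ?_⟩
      · rw [dot_sub_right', hm, hj]; push_cast; ring
      · show x - δ + h + h = x
        rw [add_assoc, hhh, sub_add_cancel]
  have hEO : deltaEven L δ ∪ deltaOdd L δ = L := by
    ext x
    constructor
    · rintro (⟨hx, -⟩ | ⟨hx, -⟩) <;> exact hx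
    · intro hx
      obtain ⟨k, hk⟩ := hint x hx
      rcases Int.even_or_odd k with ⟨m, hm⟩ | ⟨m, hm⟩
      · exact Or.inl ⟨hx, m, by rw [hk, hm]; push_cast; ring⟩
      · exact Or.inr ⟨hx, m, by rw [hk, hm]; push_cast; ring⟩
  show deltaEven (orbMinus L δ) δ ∪ shiftSet (deltaOdd (orbMinus L δ) δ) h = L
  rw [hEM, hOM, hshift2, hEO]

end PaperFormal
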